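/- In the Menelaus sequent system, every derivable sequent can be derived by a normal derivation, i.e. a derivation in which no application of a cut rule is preceded by an application of ⊓-introduction or ↔-introduction. -/

import Mathlib

/-!
Cut-only derivations contain atoms only, so in a normal derivation every compound formula
is brought in by an introduction rule. Normal derivations are closed under mix, and a cut
can be pushed up past every introduction whose principal formula is not the cut formula.
Cut is then admissible by induction on the cut formula: a cut on an atom travels up both
derivations into their cut-only parts, and a cut on `α ⊓ β` (resp. `α ↔ β`) that has met
the two introductions of that formula is replaced by a cut on `α` (resp. cuts on `α` and
on `β`, joined by a mix).
-/

/-- Formulae of the Menelaus system over a set `W` of letters: atomic formulae are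
sextuples of mutually distinct letters, compound formulae use the connectives `⊓`
(`conj`) and `↔` (`equ`). -/
inductive MFormula (W : Type*) : Type _
  | atom : {f : Fin 6 → W // Function.Injective f} → MFormula W
  | conj : MFormula W → MFormula W → MFormula W
  | equ : MFormula W → MFormula W → MFormula W

/-- Derivability in the Menelaus system, with axiomatic sequents taken from an
arbitrary set `Ax` of atomic sequents (multisets of atomic formulae).  Rules: the two
cut rules, `⊓`-introduction and `↔`-introduction. -/
inductive MDeriv {W : Type*} (Ax : Set (Multiset {f : Fin 6 → W // Function.Injective f})) :
    Multiset (MFormula W) → Prop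
  | ax {Γ} : Γ ∈ Ax → MDeriv Ax (Γ.map MFormula.atom)
  | cut {φ Γ Δ} : MDeriv Ax (φ ::ₘ Γ) → MDeriv Ax (φ ::ₘ Δ) → MDeriv Ax (Γ + Δ)
  | mix {Γ Δ} : MDeriv Ax Γ → MDeriv Ax Δ → MDeriv Ax (Γ + Δ)
  | conj {φ ψ Γ} : MDeriv Ax (φ ::ₘ Γ) → MDeriv Ax (ψ ::ₘ Γ) →
      MDeriv Ax (MFormula.conj φ ψ ::ₘ Γ)
  | equ {φ ψ Γ Δ} : MDeriv Ax (φ ::ₘ Γ) → MDeriv Ax (ψ ::ₘ Δ) →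
      MDeriv Ax (MFormula.equ φ ψ ::ₘ (Γ + Δ))

/-- Sequents derivable from the axioms using the cut rules only. -/
inductive MDerivCut {W : Type*} (Ax : Set (Multiset {f : Fin 6 → W // Function.Injective f})) :
    Multiset (MFormula W) → Prop
  | ax {Γ} : Γ ∈ Ax → MDerivCut Ax (Γ.map MFormula.atom)
  | cut {φ Γ Δ} : MDerivCut Ax (φ ::ₘ Γ) → MDerivCut Ax (φ ::ₘ Δ) → MDerivCut Ax (Γ + Δ)
  | mix {Γ Δ} : MDerivCut Ax Γ → MDerivCut Ax Δ → MDerivCut Ax (Γ + Δ)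

/-- Sequents having a *normal* derivation: a derivation in which no cut is preceded by
an introduction rule, i.e. all cuts are performed first (on sequents derived from the
axioms by cuts alone) and the introduction rules are applied afterwards. -/
inductive MDerivNormal {W : Type*}
    (Ax : Set (Multiset {f : Fin 6 → W // Function.Injective f})) :
    Multiset (MFormula W) → Prop
  | base {Γ} : MDerivCut Ax Γ → MDerivNormal Ax Γ
  | conj {φ ψ Γ} : MDerivNormal Ax (φ ::ₘ Γ) → MDerivNormal Ax (ψ ::ₘ Γ) →
      MDerivNormal Ax (MFormula.conj φ ψ ::ₘ Γ)
  | equ {φ ψ Γ Δ} : MDerivNormal Ax (φ ::ₘ Γ) → MDerivNormal Ax (ψ ::ₘ Δ) →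
      MDerivNormal Ax (MFormula.equ φ ψ ::ₘ (Γ + Δ))

theorem Multiset.cons_eq_cons_add {α : Type*} {a b : α} {s t u : Multiset α}
    (h : a ::ₘ s = b ::ₘ (t + u)) :
    (a = b ∧ s = t + u) ∨ (∃ t', t = a ::ₘ t' ∧ s = b ::ₘ (t' + u)) ∨
      ∃ u', u = a ::ₘ u' ∧ s = b ::ₘ (t + u') := by
  rcases Multiset.cons_eq_cons.1 h with hab | ⟨-, v, rfl, hv⟩
  · exact .inl hab
  have ha : a ∈ t + u := by rw [hv]; exact Multiset.mem_cons_self _ _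
  rcases Multiset.mem_add.1 ha with ht | hu
  · obtain ⟨t', rfl⟩ := Multiset.exists_cons_of_mem ht
    rw [Multiset.cons_add, Multiset.cons_inj_right] at hv
    exact .inr (.inl ⟨t', rfl, by rw [hv]⟩)
  · obtain ⟨u', rfl⟩ := Multiset.exists_cons_of_mem hu
    rw [Multiset.add_cons, Multiset.cons_inj_right] at hv
    exact .inr (.inr ⟨u', rfl, by rw [hv]⟩)

section

variable {W : Type*} {Ax : Set (Multiset {f : Fin 6 → W // Function.Injective f})}

theorem MDerivCut.exists_atom_of_mem {Γ : Multiset (MFormula W)} (h : MDerivCut Ax Γ)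
    {φ : MFormula W} (hφ : φ ∈ Γ) : ∃ a, φ = .atom a := by
  induction h with
  | ax _ =>
    obtain ⟨a, -, rfl⟩ := Multiset.mem_map.1 hφ
    exact ⟨a, rfl⟩
  | cut _ _ ihΓ ihΔ =>
    rcases Multiset.mem_add.1 hφ with hΓ | hΔ
    exacts [ihΓ (Multiset.mem_cons_of_mem hΓ), ihΔ (Multiset.mem_cons_of_mem hΔ)]
  | mix _ _ ihΓ ihΔ =>
    rcases Multiset.mem_add.1 hφ with hΓ | hΔ
    exacts [ihΓ hΓ, ihΔ hΔ]

namespace MDerivNormal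

theorem mix_of_cut {Γ Δ : Multiset (MFormula W)} (hΓ : MDerivCut Ax Γ)
    (hΔ : MDerivNormal Ax Δ) : MDerivNormal Ax (Γ + Δ) := by
  induction hΔ with
  | base hΔ => exact .base (hΓ.mix hΔ)
  | conj _ _ ihφ ihψ =>
    rw [Multiset.add_cons] at ihφ ihψ ⊢
    exact .conj ihφ ihψ
  | @equ φ ψ Δ₁ Δ₂ _ hψ ihφ _ =>
    rw [Multiset.add_cons] at ihφ
    simpa only [Multiset.add_cons, add_assoc] using ihφ.equ hψ

theorem mix {Γ Δ : Multiset (MFormula W)} (hΓ : MDerivNormal Ax Γ)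
    (hΔ : MDerivNormal Ax Δ) : MDerivNormal Ax (Γ + Δ) := by
  induction hΓ with
  | base hΓ => exact mix_of_cut hΓ hΔ
  | conj _ _ ihφ ihψ =>
    rw [Multiset.cons_add] at ihφ ihψ ⊢
    exact .conj ihφ ihψ
  | @equ φ ψ Γ₁ Γ₂ _ hψ ihφ _ =>
    rw [Multiset.cons_add] at ihφ
    simpa only [Multiset.cons_add, add_right_comm] using ihφ.equ hψ

/-- A cut against `Θ` pushed up a normal derivation of `φ ::ₘ Δ` until it meets the step
that introduces `φ`, or the cut-only part. -/
theorem cut_of_principal {φ : MFormula W} {Θ Δ : Multiset (MFormula W)}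
    (h : MDerivNormal Ax (φ ::ₘ Δ))
    (hbase : ∀ {Δ}, MDerivCut Ax (φ ::ₘ Δ) → MDerivNormal Ax (Θ + Δ))
    (hconj : ∀ {α β Δ}, φ = .conj α β → MDerivNormal Ax (α ::ₘ Δ) →
      MDerivNormal Ax (β ::ₘ Δ) → MDerivNormal Ax (Θ + Δ))
    (hequ : ∀ {α β Δ₁ Δ₂}, φ = .equ α β → MDerivNormal Ax (α ::ₘ Δ₁) →
      MDerivNormal Ax (β ::ₘ Δ₂) → MDerivNormal Ax (Θ + (Δ₁ + Δ₂))) :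
    MDerivNormal Ax (Θ + Δ) := by
  generalize hΛ : φ ::ₘ Δ = Λ at h
  induction h generalizing Δ with
  | base hc => exact hbase (hΛ ▸ hc)
  | conj hα hβ ihα ihβ =>
    rcases Multiset.cons_eq_cons.1 hΛ with ⟨rfl, rfl⟩ | ⟨-, Δ', rfl, rfl⟩
    · exact hconj rfl hα hβ
    have hα' := ihα (Multiset.cons_swap _ _ _)
    have hβ' := ihβ (Multiset.cons_swap _ _ _)
    rw [Multiset.add_cons] at hα' hβ' ⊢
    exact .conj hα' hβ'
  | equ hα hβ ihα ihβ =>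
    rcases Multiset.cons_eq_cons_add hΛ with ⟨rfl, rfl⟩ | ⟨Δ₁, rfl, rfl⟩ | ⟨Δ₂, rfl, rfl⟩
    · exact hequ rfl hα hβ
    · have hα' := ihα (Multiset.cons_swap _ _ _)
      rw [Multiset.add_cons] at hα'
      simpa only [Multiset.add_cons, add_assoc] using hα'.equ hβ
    · have hβ' := ihβ (Multiset.cons_swap _ _ _)
      rw [Multiset.add_cons] at hβ'
      simpa only [Multiset.add_cons, add_left_comm] using hα.equ hβ'

theorem cut {φ : MFormula W} {Γ Δ : Multiset (MFormula W)} (hΓ : MDerivNormal Ax (φ ::ₘ Γ))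
    (hΔ : MDerivNormal Ax (φ ::ₘ Δ)) : MDerivNormal Ax (Γ + Δ) := by
  induction φ generalizing Γ Δ with
  | atom a =>
    rw [add_comm]
    refine hΓ.cut_of_principal (fun hcΓ => ?_) (fun h => nomatch h) (fun h => nomatch h)
    rw [add_comm]
    exact hΔ.cut_of_principal (fun hcΔ => .base (hcΓ.cut hcΔ))
      (fun h => nomatch h) (fun h => nomatch h)
  | conj α β ihα _ =>
    rw [add_comm]
    refine hΓ.cut_of_principal (fun hcΓ => ?_) (fun hφ hαΓ _ => ?_) (fun h => nomatch h)
    · obtain ⟨_, ⟨⟩⟩ := hcΓ.exists_atom_of_mem (Multiset.mem_cons_self _ _)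
    rcases hφ with ⟨⟩
    rw [add_comm]
    refine hΔ.cut_of_principal (fun hcΔ => ?_) (fun hφ hαΔ _ => ?_) (fun h => nomatch h)
    · obtain ⟨_, ⟨⟩⟩ := hcΔ.exists_atom_of_mem (Multiset.mem_cons_self _ _)
    rcases hφ with ⟨⟩
    exact ihα hαΓ hαΔ
  | equ α β ihα ihβ =>
    rw [add_comm]
    refine hΓ.cut_of_principal (fun hcΓ => ?_) (fun h => nomatch h) (fun hφ hαΓ hβΓ => ?_)
    · obtain ⟨_, ⟨⟩⟩ := hcΓ.exists_atom_of_mem (Multiset.mem_cons_self _ _)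
    rcases hφ with ⟨⟩
    rw [add_comm]
    refine hΔ.cut_of_principal (fun hcΔ => ?_) (fun h => nomatch h) (fun hφ hαΔ hβΔ => ?_)
    · obtain ⟨_, ⟨⟩⟩ := hcΔ.exists_atom_of_mem (Multiset.mem_cons_self _ _)
    rcases hφ with ⟨⟩
    simpa only [add_assoc, add_left_comm] using (ihα hαΓ hαΔ).mix (ihβ hβΓ hβΔ)

end MDerivNormal

end

theorem menelaus_normalisation {W : Type*}
    (Ax : Set (Multiset {f : Fin 6 → W // Function.Injective f}))
    (Γ : Multiset (MFormula W)) (h : MDeriv Ax Γ) :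
    MDerivNormal Ax Γ := by
  induction h with
  | ax hΓ => exact .base (.ax hΓ)
  | cut _ _ ihΓ ihΔ => exact ihΓ.cut ihΔ
  | mix _ _ ihΓ ihΔ => exact ihΓ.mix ihΔ
  | conj _ _ ihφ ihψ => exact .conj ihφ ihψ
  | equ _ _ ihφ ihψ => exact .equ ihφ ihψ
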